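/- (Gronwall comparison for the LQ model) Let φⁿ, φ^∞ : [0,T] → ℝ be continuous and bounded, and let X^i, Y^i (i = 1,…,n) be continuous real-valued paths with X^i_0 = Y^i_0 satisfying, for all t, X^i_t − Y^i_t = ∫₀ᵗ [(b̄+q+(1−1/n)φⁿ_s)(X̄_s − X^i_s) − (b̄+q+φ^∞_s)(Ȳ_s − Y^i_s)] ds, where X̄_s = (1/n)∑ⱼ X^j_s and Ȳ_s = (1/n)∑ⱼ Y^j_s. Then there is a constant C depending only on T, b̄, q, and the uniform bounds on φⁿ, φ^∞ such that (1/n)∑_{i=1}^n sup_{t∈[0,T]}|X^i_t − Y^i_t| ≤ C · sup_{t∈[0,T]}|(1−1/n)φⁿ_t − φ^∞_t| · (1/n)∑_{i=1}^n sup_{t∈[0,T]}|X^i_t|. -/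

import Mathlib

/-! With `Z = X - Y` the integrand splits as
`(b + q + φ^∞)(Z̄ - Zⁱ) + ((1 - 1/n)φⁿ - φ^∞)(X̄ - Xⁱ)`, so `|Zⁱ_t|` is bounded by the integral
of `K (avg |Z| + |Zⁱ|) + δ (avg sup |X| + sup |Xⁱ|)`, with `K = |b| + |q| + M` and `δ` the sup of
`|(1 - 1/n)φⁿ - φ^∞|`. This bound is increasing in `t`, so it also bounds `sup |Zⁱ|`; averaging
over `i`, the primitive `F t = ∫₀ᵗ (2K avg |Z| + 2δ avg sup |X|)` dominates `avg |Z|`, hence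
satisfies `F' ≤ 2K F + 2δ avg sup |X|`, and Gronwall gives `F T ≤ 2T e^{2KT} δ avg sup |X|`. -/

open Set intervalIntegral Real MeasureTheory

lemma abs_le_biSup_abs {α : Type*} [TopologicalSpace α] {f : α → ℝ} {s : Set α}
    (hs : IsCompact s) (hf : ContinuousOn f s) {x : α} (hx : x ∈ s) :
    |f x| ≤ ⨆ y ∈ s, |f y| := by
  obtain ⟨B, hB⟩ := hs.bddAbove_image hf.abs
  refine le_ciSup₂ (f := fun y (_ : y ∈ s) => |f y|) ⟨B, ?_⟩ x hx
  simp only [mem_upperBounds, mem_iUnion, mem_range]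
  rintro _ ⟨y, hy, rfl⟩
  exact hB ⟨y, hy, rfl⟩

lemma abs_mul_sum_le {ι : Type*} (s : Finset ι) (f : ι → ℝ) {c : ℝ} (hc : 0 ≤ c) :
    |c * ∑ i ∈ s, f i| ≤ c * ∑ i ∈ s, |f i| := by
  rw [abs_mul, abs_of_nonneg hc]
  exact mul_le_mul_of_nonneg_left (Finset.abs_sum_le_sum_abs _ _) hc

lemma gronwallBound_zero_le_mul_exp {K ε x : ℝ} (hK : 0 ≤ K) (hε : 0 ≤ ε) :
    gronwallBound 0 K ε x ≤ ε * x * exp (K * x) := by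
  rcases hK.eq_or_lt with rfl | hK
  · simp [gronwallBound_K0]
  simp only [gronwallBound_of_K_ne_0 hK.ne', zero_mul, zero_add]
  rw [div_mul_eq_mul_div, div_le_iff₀ hK]
  have h := mul_le_mul_of_nonneg_right (one_sub_le_exp_neg (K * x)) (exp_pos (K * x)).le
  rw [← exp_add, neg_add_cancel, exp_zero] at h
  nlinarith [mul_le_mul_of_nonneg_left h hε]

lemma integral_le_mul_exp_of_le_integral {w : ℝ → ℝ} (hw : Continuous w) {a c T : ℝ}
    (ha : 0 ≤ a) (hc : 0 ≤ c) (hT : 0 ≤ T)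
    (h : ∀ t ∈ Icc 0 T, w t ≤ ∫ s in 0..t, (a * w s + c)) :
    ∫ s in 0..T, (a * w s + c) ≤ c * T * exp (a * T) := by
  have hcont : Continuous fun s => a * w s + c := by fun_prop
  have hF (t : ℝ) : HasDerivAt (fun u => ∫ s in 0..u, (a * w s + c)) (a * w t + c) t :=
    (hcont.integral_hasStrictDerivAt 0 t).hasDerivAt
  have hgron := le_gronwallBound_of_liminf_deriv_right_le (δ := 0) (K := a) (ε := c)
    (continuous_primitive hcont.intervalIntegrable 0).continuousOn
    (fun x _ r hr => (hF x).hasDerivWithinAt.liminf_right_slope_le hr) (by simp)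
    (fun x hx => by gcongr; exact h x (Ico_subset_Icc_self hx)) T ⟨hT, le_rfl⟩
  rw [sub_zero] at hgron
  exact hgron.trans (gronwallBound_zero_le_mul_exp ha hc)

lemma biSup_Icc_le_integral {f g : ℝ → ℝ} {T : ℝ} (hT : 0 ≤ T)
    (hg : IntervalIntegrable g volume 0 T) (hg0 : ∀ s, 0 ≤ g s)
    (h : ∀ t ∈ Icc 0 T, f t ≤ ∫ s in 0..t, g s) :
    ⨆ t ∈ Icc 0 T, f t ≤ ∫ s in 0..T, g s := by
  have hbound : 0 ≤ ∫ s in 0..T, g s := integral_nonneg hT fun s _ => hg0 s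
  refine Real.iSup_le (fun t => Real.iSup_le (fun ht => ?_) hbound) hbound
  exact (h t ht).trans (integral_mono_interval le_rfl ht.1 ht.2 (ae_of_all _ hg0) hg)

theorem average_biSup_abs_le_of_abs_le_integral {ι : Type*} [Fintype ι] [Nonempty ι]
    {Z : ι → ℝ → ℝ} (hZ : ∀ i, Continuous (Z i)) {K T : ℝ} {r : ι → ℝ}
    (hK : 0 ≤ K) (hT : 0 ≤ T) (hr : ∀ i, 0 ≤ r i)
    (h : ∀ i, ∀ t ∈ Icc 0 T, |Z i t| ≤
      ∫ s in 0..t, (K * ((Fintype.card ι : ℝ)⁻¹ * ∑ j, |Z j s| + |Z i s|) + r i)) :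
    (Fintype.card ι : ℝ)⁻¹ * ∑ i, ⨆ t ∈ Icc 0 T, |Z i t| ≤
      T * exp (2 * K * T) * ((Fintype.card ι : ℝ)⁻¹ * ∑ i, r i) := by
  set N : ℝ := (Fintype.card ι : ℝ)⁻¹
  set w : ℝ → ℝ := fun s => N * ∑ j, |Z j s|
  set r' : ℝ := N * ∑ i, r i
  have hN : 0 ≤ N := by positivity
  have hw : Continuous w := by fun_prop
  have hg (i : ι) : Continuous fun s => K * (w s + |Z i s|) + r i := by fun_prop
  have hg0 (i : ι) (s : ℝ) : 0 ≤ K * (w s + |Z i s|) + r i := by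
    have := hr i; positivity
  have havg (t : ℝ) : N * ∑ i, ∫ s in 0..t, (K * (w s + |Z i s|) + r i) =
      ∫ s in 0..t, (2 * K * w s + r') := by
    rw [← integral_finsetSum fun i _ => (hg i).intervalIntegrable _ _,
      ← intervalIntegral.integral_const_mul]
    congr 1 with s
    have hcard : (Fintype.card ι : ℝ) ≠ 0 := by positivity
    simp only [w, r', N, Finset.sum_add_distrib, ← Finset.mul_sum, Finset.sum_const,
      Finset.card_univ, nsmul_eq_mul]
    field_simp
    ring
  have hw_le (t : ℝ) (ht : t ∈ Icc 0 T) : w t ≤ ∫ s in 0..t, (2 * K * w s + r') := by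
    rw [← havg]
    exact mul_le_mul_of_nonneg_left (Finset.sum_le_sum fun i _ => h i t ht) hN
  calc N * ∑ i, ⨆ t ∈ Icc 0 T, |Z i t|
      ≤ N * ∑ i, ∫ s in 0..T, (K * (w s + |Z i s|) + r i) := by
        gcongr with i
        exact biSup_Icc_le_integral hT ((hg i).intervalIntegrable _ _) (hg0 i) (h i)
    _ = ∫ s in 0..T, (2 * K * w s + r') := havg T
    _ ≤ r' * T * exp (2 * K * T) :=
        integral_le_mul_exp_of_le_integral hw (by positivity)
          (mul_nonneg hN (Finset.sum_nonneg fun i _ => hr i)) hT hw_le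
    _ = T * exp (2 * K * T) * r' := by ring

lemma abs_mul_sub_mul_le {β a c u v K D U V : ℝ} (hK : |β + c| ≤ K) (hD : |a - c| ≤ D)
    (hU : |u| ≤ U) (hV : |u - v| ≤ V) :
    |(β + a) * u - (β + c) * v| ≤ K * V + D * U := by
  have hK0 : 0 ≤ K := (abs_nonneg _).trans hK
  have hD0 : 0 ≤ D := (abs_nonneg _).trans hD
  calc |(β + a) * u - (β + c) * v| = |(β + c) * (u - v) + (a - c) * u| := by ring_nf
    _ ≤ |β + c| * |u - v| + |a - c| * |u| := by
        rw [← abs_mul, ← abs_mul]; exact abs_add_le _ _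
    _ ≤ K * V + D * U := by gcongr

lemma lq_abs_sub_le_integral {n : ℕ} {T b q M D : ℝ} {φn φi : ℝ → ℝ}
    {X Y : Fin n → ℝ → ℝ} {R : Fin n → ℝ}
    (hX : ∀ i, Continuous (X i)) (hY : ∀ i, Continuous (Y i))
    (hφi : ∀ t ∈ Icc (0:ℝ) T, |φi t| ≤ M)
    (hD : ∀ t ∈ Icc (0:ℝ) T, |(1 - 1 / (n : ℝ)) * φn t - φi t| ≤ D)
    (hR : ∀ i, ∀ t ∈ Icc (0:ℝ) T, |X i t| ≤ R i)
    (hXY : ∀ i, ∀ t ∈ Icc (0:ℝ) T,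
      X i t - Y i t =
        ∫ s in (0:ℝ)..t,
          ((b + q + (1 - 1 / (n : ℝ)) * φn s) * ((1 / (n : ℝ)) * ∑ j, X j s - X i s)
            - (b + q + φi s) * ((1 / (n : ℝ)) * ∑ j, Y j s - Y i s)))
    (i : Fin n) {t : ℝ} (ht : t ∈ Icc 0 T) :
    |X i t - Y i t| ≤ ∫ s in 0..t,
      ((|b| + |q| + M) * ((1 / (n : ℝ)) * ∑ j, |X j s - Y j s| + |X i s - Y i s|)
        + D * ((1 / (n : ℝ)) * ∑ j, R j + R i)) := by
  have hn : (0 : ℝ) ≤ 1 / n := by positivity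
  rw [hXY i t ht, ← Real.norm_eq_abs]
  refine norm_integral_le_of_norm_le ht.1 (ae_of_all _ fun s hs => ?_)
    (Continuous.intervalIntegrable (by fun_prop) _ _)
  have hs : s ∈ Icc 0 T := ⟨hs.1.le, hs.2.trans ht.2⟩
  rw [Real.norm_eq_abs]
  refine abs_mul_sub_mul_le ?_ (hD s hs) ?_ ?_
  · exact (abs_add_three _ _ _).trans (by gcongr; exact hφi s hs)
  · refine (abs_sub _ _).trans (add_le_add ((abs_mul_sum_le _ _ hn).trans ?_) (hR i s hs))
    exact mul_le_mul_of_nonneg_left (Finset.sum_le_sum fun j _ => hR j s hs) hn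
  · have hdiff : (1 / (n : ℝ)) * ∑ j, X j s - X i s - ((1 / (n : ℝ)) * ∑ j, Y j s - Y i s) =
        (1 / (n : ℝ)) * ∑ j, (X j s - Y j s) - (X i s - Y i s) := by
      rw [Finset.sum_sub_distrib]; ring
    rw [hdiff]
    exact (abs_sub _ _).trans (add_le_add_left (abs_mul_sum_le _ _ hn) _)

/-- Gronwall comparison for the LQ model.
Let `φⁿ, φ^∞ : [0,T] → ℝ` be continuous and bounded by `M`, and let `X^i, Y^i` be continuous
real paths with `X^i_0 = Y^i_0` satisfying
`X^i_t − Y^i_t = ∫₀ᵗ [(b̄+q+(1−1/n)φⁿ_s)(X̄_s − X^i_s) − (b̄+q+φ^∞_s)(Ȳ_s − Y^i_s)] ds`.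
Then there is a constant `C` depending only on `T, b̄, q` and `M` such that
`(1/n)∑ᵢ sup_{[0,T]}|X^i − Y^i| ≤ C · sup_{[0,T]}|(1−1/n)φⁿ − φ^∞| · (1/n)∑ᵢ sup_{[0,T]}|X^i|`. -/
theorem lq_gronwall_comparison (T b q M : ℝ) (hT : 0 < T) (hM : 0 ≤ M) :
    ∃ C : ℝ, ∀ (n : ℕ), 0 < n →
      ∀ (φn φi : ℝ → ℝ) (X Y : Fin n → ℝ → ℝ),
        Continuous φn → Continuous φi →
        (∀ t ∈ Set.Icc (0:ℝ) T, |φn t| ≤ M) →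
        (∀ t ∈ Set.Icc (0:ℝ) T, |φi t| ≤ M) →
        (∀ i, Continuous (X i)) → (∀ i, Continuous (Y i)) →
        (∀ i, X i 0 = Y i 0) →
        (∀ i, ∀ t ∈ Set.Icc (0:ℝ) T,
          X i t - Y i t =
            ∫ s in (0:ℝ)..t,
              ((b + q + (1 - 1 / (n : ℝ)) * φn s) * ((1 / (n : ℝ)) * ∑ j, X j s - X i s)
                - (b + q + φi s) * ((1 / (n : ℝ)) * ∑ j, Y j s - Y i s))) →
        (1 / (n : ℝ)) * ∑ i, (⨆ t ∈ Set.Icc (0:ℝ) T, |X i t - Y i t|) ≤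
          C * (⨆ t ∈ Set.Icc (0:ℝ) T, |(1 - 1 / (n : ℝ)) * φn t - φi t|) *
            ((1 / (n : ℝ)) * ∑ i, ⨆ t ∈ Set.Icc (0:ℝ) T, |X i t|) := by
  refine ⟨2 * T * exp (2 * (|b| + |q| + M) * T),
    fun n hn φn φi X Y hφn hφi _ hφiM hX hY _ hXY => ?_⟩
  have : Nonempty (Fin n) := ⟨⟨0, hn⟩⟩
  set D := ⨆ t ∈ Icc (0:ℝ) T, |(1 - 1 / (n : ℝ)) * φn t - φi t|
  set R : Fin n → ℝ := fun i => ⨆ t ∈ Icc (0:ℝ) T, |X i t|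
  have hD (t : ℝ) (ht : t ∈ Icc 0 T) : |(1 - 1 / (n : ℝ)) * φn t - φi t| ≤ D :=
    abs_le_biSup_abs isCompact_Icc ((continuous_const.mul hφn).sub hφi).continuousOn ht
  have hR (i : Fin n) (t : ℝ) (ht : t ∈ Icc 0 T) : |X i t| ≤ R i :=
    abs_le_biSup_abs isCompact_Icc (hX i).continuousOn ht
  have hD0 : 0 ≤ D := (abs_nonneg _).trans (hD 0 ⟨le_rfl, hT.le⟩)
  have hR0 (i : Fin n) : 0 ≤ R i := (abs_nonneg _).trans (hR i 0 ⟨le_rfl, hT.le⟩)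
  have key := average_biSup_abs_le_of_abs_le_integral (Z := fun i t => X i t - Y i t)
    (K := |b| + |q| + M) (r := fun i => D * ((1 / (n : ℝ)) * ∑ j, R j + R i))
    (fun i => (hX i).sub (hY i)) (by positivity) hT.le (fun i => mul_nonneg hD0
      (add_nonneg (mul_nonneg (by positivity) (Finset.sum_nonneg fun j _ => hR0 j)) (hR0 i)))
    (by simpa only [Fintype.card_fin, one_div] using
      fun i t ht => lq_abs_sub_le_integral hX hY hφiM hD hR hXY i ht)
  simp only [Fintype.card_fin, ← one_div] at key
  refine key.trans_eq ?_
  have hn0 : (n : ℝ) ≠ 0 := by positivity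
  rw [Finset.mul_sum, Finset.mul_sum]
  simp only [Finset.sum_add_distrib, mul_add, ← Finset.mul_sum, Finset.sum_const,
    Finset.card_univ, Fintype.card_fin, nsmul_eq_mul]
  field_simp
  ring
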